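/- arXiv:1407.1369 — 8 statements merged into one kernel-verified Lean document; each statement's English description precedes it below -/
import Mathlib

section
/- For every n ≥ 1, ∑_{k=1}^{n} R_k² = [4·R_n·R_{n+1} − 4·R_0·R_1 − (R_{n+1} − R_{n-1})² + (R_{-2} + R_0)²]/4. -/
/-! The quantity `Q m = 4 R_m R_{m+1} - (R_{m+1} - R_{m-1})²` increases by exactly `4 R_{m+1}²`
from `m` to `m + 1` (expand `R_{m+2} - R_m = R_{m+1} + R_{m-1}`), so `4 ∑_{k=1}^n R_k²` telescopes
to `Q n - Q 0`, and the recurrence at `1` rewrites `R_1 - R_{-1}` as `R_{-2} + R_0`. -/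

section Tribonacci

variable {A : Type*} [CommRing A] {R : ℤ → A}

theorem four_mul_sq_succ_eq_sub_of_tribonacci
    (hrec : ∀ m : ℤ, R m = R (m - 1) + R (m - 2) + R (m - 3)) (m : ℤ) :
    4 * R (m + 1) ^ 2 =
      (4 * R (m + 1) * R (m + 2) - (R (m + 2) - R m) ^ 2)
        - (4 * R m * R (m + 1) - (R (m + 1) - R (m - 1)) ^ 2) := by
  have h := hrec (m + 2)
  rw [show m + 2 - 1 = m + 1 by ring, show m + 2 - 2 = m by ring,
    show m + 2 - 3 = m - 1 by ring] at h
  rw [h]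
  ring

theorem four_mul_sum_Icc_sq_of_tribonacci
    (hrec : ∀ m : ℤ, R m = R (m - 1) + R (m - 2) + R (m - 3)) (n : ℕ) :
    4 * ∑ k ∈ Finset.Icc (1 : ℤ) n, R k ^ 2 =
      (4 * R n * R (n + 1) - (R (n + 1) - R (n - 1)) ^ 2)
        - (4 * R 0 * R 1 - (R 1 - R (-1)) ^ 2) := by
  induction n with
  | zero => simp
  | succ n ih =>
    push_cast
    rw [← Finset.insert_Icc_right_eq_Icc_add_one (by omega),
      Finset.sum_insert (by simp), mul_add, ih, four_mul_sq_succ_eq_sub_of_tribonacci hrec,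
      show (n : ℤ) + 1 + 1 = n + 2 by ring, add_sub_cancel_right]
    ring

end Tribonacci

theorem sum_sq_generalized_tribonacci_general
    (R : ℤ → ℝ)
    (hrec : ∀ m : ℤ, R m = R (m - 1) + R (m - 2) + R (m - 3))
    (n : ℕ) :
    ∑ k ∈ Finset.Icc (1 : ℤ) (n : ℤ), R k ^ 2 =
      (4 * R (n : ℤ) * R ((n : ℤ) + 1) - 4 * R 0 * R 1
        - (R ((n : ℤ) + 1) - R ((n : ℤ) - 1)) ^ 2 + (R (-2) + R 0) ^ 2) / 4 := by
  have hsum := four_mul_sum_Icc_sq_of_tribonacci hrec n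
  have hinit : R 1 - R (-1) = R (-2) + R 0 := by
    have h := hrec 1
    norm_num at h
    linarith
  rw [hinit] at hsum
  linarith

/-- sum of squares of the first `n` terms of the generalized
tribonacci sequence. -/
theorem sum_sq_generalized_tribonacci
    (a b c : ℤ) (ha : 0 < a) (hb : 0 < b) (hc : 0 < c)
    (R : ℤ → ℝ) (hR0 : R 0 = (a : ℝ)) (hR1 : R 1 = (b : ℝ)) (hR2 : R 2 = (c : ℝ))
    (hrec : ∀ m : ℤ, R m = R (m - 1) + R (m - 2) + R (m - 3))
    (n : ℕ) (hn : 1 ≤ n) :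
    ∑ k ∈ Finset.Icc (1 : ℤ) (n : ℤ), R k ^ 2 =
      (4 * R (n : ℤ) * R ((n : ℤ) + 1) - 4 * R 0 * R 1
        - (R ((n : ℤ) + 1) - R ((n : ℤ) - 1)) ^ 2 + (R (-2) + R 0) ^ 2) / 4 :=
  sum_sq_generalized_tribonacci_general R hrec n
end

section
/- For every n ≥ 1, ∑_{k=1}^{n} R_k·R_{k-2} = [(R_{n+1} − R_{n-1})² − (R_{-2} + R_0)²]/4. -/
/-!
Since `R (m + 1) - R (m - 1) = R m + R (m - 2)`, the product `4 R_m R_{m-2}` is the difference of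
squares `(R_m + R_{m-2})² - (R_m - R_{m-2})² = D_m² - D_{m-1}²` with `D_m = R_{m+1} - R_{m-1}`,
so the sum telescopes to `D_n² - D_0²`, and `D_0 = R_{-2} + R_0`.
-/

open Finset

theorem Int.sum_Icc_one_sub_eq {M : Type*} [AddCommGroup M] (g : ℤ → M) (n : ℕ) :
    ∑ k ∈ Icc (1 : ℤ) n, (g k - g (k - 1)) = g n - g 0 := by
  induction n with
  | zero => simp
  | succ n ih =>
    push_cast
    rw [← insert_Icc_right_eq_Icc_add_one (by omega), sum_insert (by simp), ih,
      add_sub_cancel_right]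
    abel

section Tribonacci

variable {α : Type*} [CommRing α] {R : ℤ → α}

theorem tribonacci_succ_sub_pred (hrec : ∀ m : ℤ, R m = R (m - 1) + R (m - 2) + R (m - 3))
    (m : ℤ) : R (m + 1) - R (m - 1) = R m + R (m - 2) := by
  have h := hrec (m + 1)
  rw [show m + 1 - 1 = m by ring, show m + 1 - 2 = m - 1 by ring,
    show m + 1 - 3 = m - 2 by ring] at h
  linear_combination h

theorem four_mul_tribonacci_mul_sub_two
    (hrec : ∀ m : ℤ, R m = R (m - 1) + R (m - 2) + R (m - 3)) (m : ℤ) :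
    4 * (R m * R (m - 2)) = (R (m + 1) - R (m - 1)) ^ 2 - (R m - R (m - 2)) ^ 2 := by
  rw [tribonacci_succ_sub_pred hrec]
  ring

theorem four_mul_sum_tribonacci_mul_sub_two
    (hrec : ∀ m : ℤ, R m = R (m - 1) + R (m - 2) + R (m - 3)) (n : ℕ) :
    4 * ∑ k ∈ Icc (1 : ℤ) n, R k * R (k - 2) =
      (R ((n : ℤ) + 1) - R ((n : ℤ) - 1)) ^ 2 - (R (-2) + R 0) ^ 2 := by
  have hterm (k : ℤ) : 4 * (R k * R (k - 2)) =
      (R (k + 1) - R (k - 1)) ^ 2 - (R (k - 1 + 1) - R (k - 1 - 1)) ^ 2 := by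
    rw [sub_add_cancel, sub_sub, show (1 : ℤ) + 1 = 2 by norm_num]
    exact four_mul_tribonacci_mul_sub_two hrec k
  rw [mul_sum, sum_congr rfl fun k _ ↦ hterm k,
    Int.sum_Icc_one_sub_eq (fun k ↦ (R (k + 1) - R (k - 1)) ^ 2), tribonacci_succ_sub_pred hrec 0]
  norm_num [add_comm]

end Tribonacci

theorem sum_mul_shift_generalized_tribonacci_general
    (R : ℤ → ℝ)
    (hrec : ∀ m : ℤ, R m = R (m - 1) + R (m - 2) + R (m - 3))
    (n : ℕ) :
    ∑ k ∈ Finset.Icc (1 : ℤ) (n : ℤ), R k * R (k - 2) =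
      ((R ((n : ℤ) + 1) - R ((n : ℤ) - 1)) ^ 2 - (R (-2) + R 0) ^ 2) / 4 := by
  rw [eq_div_iff four_ne_zero, mul_comm]
  exact four_mul_sum_tribonacci_mul_sub_two hrec n

/-- sum of the products `R_k R_{k-2}` for the generalized
tribonacci sequence. -/
theorem sum_mul_shift_generalized_tribonacci
    (a b c : ℤ) (ha : 0 < a) (hb : 0 < b) (hc : 0 < c)
    (R : ℤ → ℝ) (hR0 : R 0 = (a : ℝ)) (hR1 : R 1 = (b : ℝ)) (hR2 : R 2 = (c : ℝ))
    (hrec : ∀ m : ℤ, R m = R (m - 1) + R (m - 2) + R (m - 3))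
    (n : ℕ) (hn : 1 ≤ n) :
    ∑ k ∈ Finset.Icc (1 : ℤ) (n : ℤ), R k * R (k - 2) =
      ((R ((n : ℤ) + 1) - R ((n : ℤ) - 1)) ^ 2 - (R (-2) + R 0) ^ 2) / 4 :=
  sum_mul_shift_generalized_tribonacci_general R hrec n
end

section
/- For every n ≥ 1, R_n·R_{n+1} = ∑_{k=1}^{n} R_k² + ∑_{k=1}^{n} R_k·R_{k-2} + R_0·R_1. -/
/-!
The recurrence at `m + 2` gives
`R (m+1) R (m+2) - R m R (m+1) = R (m+1)² + R (m+1) R (m-1)`,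
so the product of consecutive terms telescopes into the two sums, starting from `R 0 R 1`.
-/

open Finset

theorem Int.sum_Icc_add_one_right {M : Type*} [AddCommMonoid M] (f : ℤ → M) {a n : ℤ}
    (h : a ≤ n + 1) :
    ∑ k ∈ Icc a (n + 1), f k = ∑ k ∈ Icc a n, f k + f (n + 1) := by
  rw [← insert_Icc_right_eq_Icc_add_one h, sum_insert (by simp), add_comm]

namespace GeneralizedTribonacci

variable {α : Type*} [CommRing α] {R : ℤ → α}

theorem mul_add_one_add_one (hrec : ∀ m, R m = R (m - 1) + R (m - 2) + R (m - 3)) (m : ℤ) :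
    R (m + 1) * R (m + 1 + 1) = R m * R (m + 1) + R (m + 1) ^ 2 + R (m + 1) * R (m + 1 - 2) := by
  have h := hrec (m + 1 + 1)
  rw [show m + 1 + 1 - 1 = m + 1 by ring, show m + 1 + 1 - 2 = m by ring,
    show m + 1 + 1 - 3 = m + 1 - 2 by ring] at h
  rw [h]
  ring

theorem mul_add_one_eq_sum (hrec : ∀ m, R m = R (m - 1) + R (m - 2) + R (m - 3)) (n : ℕ) :
    R n * R (n + 1) =
      ∑ k ∈ Icc (1 : ℤ) n, R k ^ 2 + ∑ k ∈ Icc (1 : ℤ) n, R k * R (k - 2) + R 0 * R 1 := by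
  induction n with
  | zero => simp
  | succ n ih =>
    have hn : (1 : ℤ) ≤ n + 1 := by omega
    push_cast
    rw [mul_add_one_add_one hrec, ih, Int.sum_Icc_add_one_right _ hn,
      Int.sum_Icc_add_one_right _ hn]
    ring

end GeneralizedTribonacci

theorem mul_consecutive_generalized_tribonacci_general
    (R : ℤ → ℝ)
    (hrec : ∀ m : ℤ, R m = R (m - 1) + R (m - 2) + R (m - 3))
    (n : ℕ) :
    R (n : ℤ) * R ((n : ℤ) + 1) =
      ∑ k ∈ Finset.Icc (1 : ℤ) (n : ℤ), R k ^ 2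
        + ∑ k ∈ Finset.Icc (1 : ℤ) (n : ℤ), R k * R (k - 2) + R 0 * R 1 :=
  GeneralizedTribonacci.mul_add_one_eq_sum hrec n

/-- the product `R_n R_{n+1}` of two consecutive generalized
tribonacci numbers in terms of sums of squares and shifted products. -/
theorem mul_consecutive_generalized_tribonacci
    (a b c : ℤ) (ha : 0 < a) (hb : 0 < b) (hc : 0 < c)
    (R : ℤ → ℝ) (hR0 : R 0 = (a : ℝ)) (hR1 : R 1 = (b : ℝ)) (hR2 : R 2 = (c : ℝ))
    (hrec : ∀ m : ℤ, R m = R (m - 1) + R (m - 2) + R (m - 3))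
    (n : ℕ) (hn : 1 ≤ n) :
    R (n : ℤ) * R ((n : ℤ) + 1) =
      ∑ k ∈ Finset.Icc (1 : ℤ) (n : ℤ), R k ^ 2
        + ∑ k ∈ Finset.Icc (1 : ℤ) (n : ℤ), R k * R (k - 2) + R 0 * R 1 :=
  mul_consecutive_generalized_tribonacci_general R hrec n
end

section
/- Let n ≥ 1, let r be a complex number with |r| ≥ 1, and let A = A_r(R_0, R_1, …, R_{n-1}) be the r-circulant matrix on the first n terms of the generalized tribonacci sequence. Then ‖A‖₂ ≥ √(∑_{k=0}^{n-1} R_k²). -/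
/-!
The first row of `A` is `(R_0, …, R_{n-1})`, and the spectral norm of a matrix dominates the
Euclidean norm of each of its rows: a column `A e_j` has norm at most `‖A‖ ‖e_j‖ = ‖A‖`, and
passing to `Aᴴ`, which has the same spectral norm, turns rows into columns.
-/

open WithLp

namespace Matrix

open scoped Matrix.Norms.L2Operator

variable {𝕜 m n : Type*} [RCLike 𝕜] [Fintype m] [Fintype n]

lemma norm_col_le_l2_opNorm [DecidableEq n] (A : Matrix m n 𝕜) (j : n) :
    ‖toLp 2 (A.col j)‖ ≤ ‖A‖ := by
  simpa [mulVec_single_one] using A.l2_opNorm_mulVec (toLp 2 (Pi.single j 1))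

lemma norm_row_le_l2_opNorm [DecidableEq m] [DecidableEq n] (A : Matrix m n 𝕜) (i : m) :
    ‖toLp 2 (A.row i)‖ ≤ ‖A‖ := by
  have h := Aᴴ.norm_col_le_l2_opNorm i
  rw [l2_opNorm_conjTranspose A] at h
  simpa [EuclideanSpace.norm_eq] using h

lemma norm_row_le_norm_toEuclideanCLM [DecidableEq n] (A : Matrix n n 𝕜) (i : n) :
    ‖toLp 2 (A.row i)‖ ≤ ‖toEuclideanCLM (𝕜 := 𝕜) A‖ :=
  A.norm_row_le_l2_opNorm i

end Matrix

theorem rcirculant_tribonacci_specNorm_lower_general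
    (R : ℤ → ℝ)
    (n : ℕ) (hn : 1 ≤ n) (r : ℂ)
    (A : Matrix (Fin n) (Fin n) ℂ)
    (hA : ∀ i j : Fin n, A i j =
      if (i : ℕ) ≤ (j : ℕ) then ((R ((j : ℤ) - (i : ℤ)) : ℝ) : ℂ)
      else r * ((R ((n : ℤ) + (j : ℤ) - (i : ℤ)) : ℝ) : ℂ)) :
    Real.sqrt (∑ k ∈ Finset.range n, R (k : ℤ) ^ 2) ≤
      ‖Matrix.toEuclideanCLM (𝕜 := ℂ) A‖ := by
  have first_row : A.row ⟨0, hn⟩ = fun j : Fin n ↦ ((R (j : ℕ) : ℝ) : ℂ) := by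
    ext j
    simp [hA]
  calc Real.sqrt (∑ k ∈ Finset.range n, R (k : ℤ) ^ 2)
      = ‖toLp 2 (A.row ⟨0, hn⟩)‖ := by
        simp [first_row, EuclideanSpace.norm_eq, Finset.sum_range fun k ↦ R (k : ℤ) ^ 2]
    _ ≤ ‖Matrix.toEuclideanCLM (𝕜 := ℂ) A‖ := A.norm_row_le_norm_toEuclideanCLM _

/-- lower bound for the spectral norm of an `r`-circulant matrix
on the generalized tribonacci sequence, when `|r| ≥ 1`. -/
theorem rcirculant_tribonacci_specNorm_lower
    (a b c : ℤ) (ha : 0 < a) (hb : 0 < b) (hc : 0 < c)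
    (R : ℤ → ℝ) (hR0 : R 0 = (a : ℝ)) (hR1 : R 1 = (b : ℝ)) (hR2 : R 2 = (c : ℝ))
    (hrec : ∀ m : ℤ, R m = R (m - 1) + R (m - 2) + R (m - 3))
    (n : ℕ) (hn : 1 ≤ n) (r : ℂ) (hr : 1 ≤ ‖r‖)
    (A : Matrix (Fin n) (Fin n) ℂ)
    (hA : ∀ i j : Fin n, A i j =
      if (i : ℕ) ≤ (j : ℕ) then ((R ((j : ℤ) - (i : ℤ)) : ℝ) : ℂ)
      else r * ((R ((n : ℤ) + (j : ℤ) - (i : ℤ)) : ℝ) : ℂ)) :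
    Real.sqrt (∑ k ∈ Finset.range n, R (k : ℤ) ^ 2) ≤
      ‖Matrix.toEuclideanCLM (𝕜 := ℂ) A‖ :=
  rcirculant_tribonacci_specNorm_lower_general R n hn r A hA
end

section
/- Let n ≥ 1, let r be a complex number with |r| ≥ 1, and let A = A_r(R_0, R_1, …, R_{n-1}) be the r-circulant matrix on the first n terms of the generalized tribonacci sequence. Then ‖A‖₂ ≤ √[(R_0² + |r|²·∑_{k=1}^{n-1} R_k²)·(1 + ∑_{k=1}^{n-1} R_k²)]. -/
/-!
The spectral norm is bounded by the Frobenius norm. Row `i` of `A_r(x)` consists of the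
entries `x_0, …, x_{n-1-i}` and `r x_{n-i}, …, r x_{n-1}`, so when `1 ≤ |r|` its squared norm is
at most `|x_0|² + |r|² ∑_{k=1}^{n-1} |x_k|²`. Since `a, b, c ≥ 1`, the recurrence gives
`R_k ≥ 1` for all `k ≥ 0`, so the number `n` of rows is at most `1 + ∑_{k=1}^{n-1} R_k²`.
-/

open Finset

theorem map_natCastEmbedding_Ico_one_eq_Icc (n : ℕ) :
    (Ico 1 n).map Nat.castEmbedding = Icc (1 : ℤ) (n - 1) := by
  ext k
  simp only [mem_map, mem_Ico, mem_Icc, Nat.castEmbedding_apply]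
  constructor
  · rintro ⟨m, hm, rfl⟩
    omega
  · intro hk
    exact ⟨k.toNat, by omega, by omega⟩

theorem Fin.sum_univ_eq_add_sum_Icc {M : Type*} [AddCommMonoid M] {n : ℕ} [NeZero n] (f : ℤ → M) :
    ∑ k : Fin n, f k = f 0 + ∑ k ∈ Icc (1 : ℤ) (n - 1), f k := by
  rw [Fin.sum_univ_eq_sum_range (fun k => f k), sum_range_eq_add_Ico _ (NeZero.pos n),
    ← map_natCastEmbedding_Ico_one_eq_Icc, sum_map]
  rfl

theorem natCast_le_one_add_sum_Icc {f : ℤ → ℝ} {n : ℕ} (hf : ∀ k ∈ Icc (1 : ℤ) (n - 1), 1 ≤ f k) :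
    (n : ℝ) ≤ 1 + ∑ k ∈ Icc (1 : ℤ) (n - 1), f k := by
  have hcard : #(Icc (1 : ℤ) (n - 1)) = n - 1 := by
    rw [← map_natCastEmbedding_Ico_one_eq_Icc, card_map, Nat.card_Ico]
  have hsum := card_nsmul_le_sum _ _ _ hf
  rw [hcard, nsmul_one] at hsum
  calc (n : ℝ) ≤ 1 + ((n - 1 : ℕ) : ℝ) := by exact_mod_cast (by omega : n ≤ 1 + (n - 1))
    _ ≤ _ := by gcongr

theorem Matrix.l2_opNorm_le_sqrt_sum_norm_sq {𝕜 ι : Type*} [RCLike 𝕜] [Fintype ι] [DecidableEq ι]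
    (A : Matrix ι ι 𝕜) :
    ‖Matrix.toEuclideanCLM (𝕜 := 𝕜) A‖ ≤ √(∑ i, ∑ j, ‖A i j‖ ^ 2) := by
  refine ContinuousLinearMap.opNorm_le_bound _ (Real.sqrt_nonneg _) fun x => ?_
  rw [← Real.sqrt_sq (norm_nonneg (toEuclideanCLM (𝕜 := 𝕜) A x)), ← Real.sqrt_sq (norm_nonneg x),
    ← Real.sqrt_mul (by positivity)]
  refine Real.sqrt_le_sqrt ?_
  rw [EuclideanSpace.norm_sq_eq, EuclideanSpace.norm_sq_eq, sum_mul]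
  refine sum_le_sum fun i _ => ?_
  calc ‖∑ j, A i j * x j‖ ^ 2 ≤ (∑ j, ‖A i j‖ * ‖x j‖) ^ 2 := by
        gcongr
        exact (norm_sum_le _ _).trans_eq (by simp only [norm_mul])
    _ ≤ (∑ j, ‖A i j‖ ^ 2) * ∑ j, ‖x j‖ ^ 2 := sum_mul_sq_le_sq_mul_sq _ _ _

theorem one_le_of_tribonacci {R : ℤ → ℝ} (h0 : 1 ≤ R 0) (h1 : 1 ≤ R 1) (h2 : 1 ≤ R 2)
    (hrec : ∀ m, R m = R (m - 1) + R (m - 2) + R (m - 3)) : ∀ k : ℕ, 1 ≤ R k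
  | 0 => h0
  | 1 => h1
  | 2 => h2
  | k + 3 => by
    have hk : R (k + 3 : ℕ) = R (k + 2 : ℕ) + R (k + 1 : ℕ) + R k := by
      rw [hrec]
      push_cast
      ring_nf
    linarith [one_le_of_tribonacci h0 h1 h2 hrec k, one_le_of_tribonacci h0 h1 h2 hrec (k + 1),
      one_le_of_tribonacci h0 h1 h2 hrec (k + 2)]


namespace Matrix

variable {𝕜 : Type*}

def rCirculant [Mul 𝕜] (n : ℕ) (r : 𝕜) (x : ℤ → 𝕜) : Matrix (Fin n) (Fin n) 𝕜 :=
  of fun i j => if (i : ℕ) ≤ j then x (j - i) else r * x (n + j - i)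

variable [SeminormedRing 𝕜] {n : ℕ} {r : 𝕜}

theorem sum_norm_sq_rCirculant_row_le (hr : 1 ≤ ‖r‖) (x : ℤ → 𝕜) (i : Fin n) :
    ∑ j, ‖rCirculant n r x i j‖ ^ 2 ≤
      ‖x 0‖ ^ 2 + ‖r‖ ^ 2 * ∑ k ∈ Icc (1 : ℤ) (n - 1), ‖x k‖ ^ 2 := by
  have : NeZero n := NeZero.of_pos i.pos
  -- `w k` bounds the squared entry at cyclic offset `k = j - i`.
  let w : ℤ → ℝ := fun k => if k = 0 then ‖x 0‖ ^ 2 else ‖r‖ ^ 2 * ‖x k‖ ^ 2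
  calc ∑ j, ‖rCirculant n r x i j‖ ^ 2 ≤ ∑ j, w (j - i : Fin n) := by
        gcongr with j
        by_cases hij : i ≤ j
        · have hk : ((j - i : Fin n) : ℤ) = j - i := by rw [Fin.sub_val_of_le hij]; omega
          simp only [rCirculant, of_apply, if_pos (show (i : ℕ) ≤ j from hij), w, hk]
          split_ifs with h0
          · rw [h0]
          · exact le_mul_of_one_le_left (by positivity) (one_le_pow₀ hr)
        · have hk : ((j - i : Fin n) : ℤ) = n + j - i := by
            rw [Fin.coe_sub_iff_lt.2 (not_le.1 hij)]; omega
          simp only [rCirculant, of_apply, if_neg (show ¬(i : ℕ) ≤ j from hij), w, hk,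
            if_neg (show (n : ℤ) + j - i ≠ 0 by omega), ← mul_pow]
          exact pow_le_pow_left₀ (norm_nonneg _) (norm_mul_le _ _) 2
    _ = ∑ k : Fin n, w k := Fintype.sum_equiv (Equiv.subRight i) _ _ fun _ => rfl
    _ = _ := by
        rw [Fin.sum_univ_eq_add_sum_Icc, mul_sum]
        refine congrArg₂ _ (if_pos rfl) (sum_congr rfl fun k hk => if_neg ?_)
        rw [mem_Icc] at hk
        omega

end Matrix

theorem rcirculant_tribonacci_specNorm_upper_general
    (a b c : ℤ) (ha : 0 < a) (hb : 0 < b) (hc : 0 < c)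
    (R : ℤ → ℝ) (hR0 : R 0 = (a : ℝ)) (hR1 : R 1 = (b : ℝ)) (hR2 : R 2 = (c : ℝ))
    (hrec : ∀ m : ℤ, R m = R (m - 1) + R (m - 2) + R (m - 3))
    (n : ℕ) (r : ℂ) (hr : 1 ≤ ‖r‖)
    (A : Matrix (Fin n) (Fin n) ℂ)
    (hA : ∀ i j : Fin n, A i j =
      if (i : ℕ) ≤ (j : ℕ) then ((R ((j : ℤ) - (i : ℤ)) : ℝ) : ℂ)
      else r * ((R ((n : ℤ) + (j : ℤ) - (i : ℤ)) : ℝ) : ℂ)) :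
    ‖Matrix.toEuclideanCLM (𝕜 := ℂ) A‖ ≤
      Real.sqrt ((R 0 ^ 2 +
          ‖r‖ ^ 2 * ∑ k ∈ Finset.Icc (1 : ℤ) ((n : ℤ) - 1), R k ^ 2) *
        (1 + ∑ k ∈ Finset.Icc (1 : ℤ) ((n : ℤ) - 1), R k ^ 2)) := by
  have hR : ∀ k : ℕ, 1 ≤ R k := one_le_of_tribonacci (by rw [hR0]; exact_mod_cast ha)
    (by rw [hR1]; exact_mod_cast hb) (by rw [hR2]; exact_mod_cast hc) hrec
  set S := ∑ k ∈ Icc (1 : ℤ) (n - 1), R k ^ 2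
  have hrow (i : Fin n) : ∑ j, ‖A i j‖ ^ 2 ≤ R 0 ^ 2 + ‖r‖ ^ 2 * S := by
    rw [show A = Matrix.rCirculant n r (fun k => (R k : ℂ)) from Matrix.ext hA]
    simpa [S] using Matrix.sum_norm_sq_rCirculant_row_le hr (fun k => (R k : ℂ)) i
  have hn : (n : ℝ) ≤ 1 + S := natCast_le_one_add_sum_Icc fun k hk => by
    lift k to ℕ using by rw [mem_Icc] at hk; omega
    exact one_le_pow₀ (hR k)
  refine (Matrix.l2_opNorm_le_sqrt_sum_norm_sq A).trans (Real.sqrt_le_sqrt ?_)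
  calc ∑ i, ∑ j, ‖A i j‖ ^ 2 ≤ n * (R 0 ^ 2 + ‖r‖ ^ 2 * S) := by
        simpa only [card_univ, Fintype.card_fin, nsmul_eq_mul]
          using sum_le_card_nsmul univ _ _ fun i _ => hrow i
    _ ≤ (R 0 ^ 2 + ‖r‖ ^ 2 * S) * (1 + S) := by
        rw [mul_comm]
        gcongr

/-- upper bound for the spectral norm of an `r`-circulant matrix
on the generalized tribonacci sequence, when `|r| ≥ 1`. -/
theorem rcirculant_tribonacci_specNorm_upper
    (a b c : ℤ) (ha : 0 < a) (hb : 0 < b) (hc : 0 < c)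
    (R : ℤ → ℝ) (hR0 : R 0 = (a : ℝ)) (hR1 : R 1 = (b : ℝ)) (hR2 : R 2 = (c : ℝ))
    (hrec : ∀ m : ℤ, R m = R (m - 1) + R (m - 2) + R (m - 3))
    (n : ℕ) (hn : 1 ≤ n) (r : ℂ) (hr : 1 ≤ ‖r‖)
    (A : Matrix (Fin n) (Fin n) ℂ)
    (hA : ∀ i j : Fin n, A i j =
      if (i : ℕ) ≤ (j : ℕ) then ((R ((j : ℤ) - (i : ℤ)) : ℝ) : ℂ)
      else r * ((R ((n : ℤ) + (j : ℤ) - (i : ℤ)) : ℝ) : ℂ)) :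
    ‖Matrix.toEuclideanCLM (𝕜 := ℂ) A‖ ≤
      Real.sqrt ((R 0 ^ 2 +
          ‖r‖ ^ 2 * ∑ k ∈ Finset.Icc (1 : ℤ) ((n : ℤ) - 1), R k ^ 2) *
        (1 + ∑ k ∈ Finset.Icc (1 : ℤ) ((n : ℤ) - 1), R k ^ 2)) :=
  rcirculant_tribonacci_specNorm_upper_general a b c ha hb hc R hR0 hR1 hR2 hrec n r hr A hA
end

section
/- Let n ≥ 1 and let A be the n×n circulant matrix on the first n terms R_0, R_1, …, R_{n-1} of the generalized tribonacci sequence. Then ‖A‖_E = √( n·[4·R_{n-1}·R_n − 4·R_0·R_1 − (R_n − R_{n-2})² + (R_{-2} + R_0)² + 4·R_0²]/4 ). -/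
open Finset

theorem Fin.sum_univ_intEmod_sub {M : Type*} [AddCommMonoid M] {n : ℕ} (f : ℤ → M)
    (i : Fin n) : ∑ j : Fin n, f (((j : ℤ) - i) % n) = ∑ k ∈ range n, f k := by
  obtain _ | n := n
  · simp
  simp_rw [← Fin.coe_int_sub_eq_mod]
  rw [← Fin.sum_univ_eq_sum_range (fun k => f k)]
  exact Fintype.sum_equiv (Equiv.subRight i) _ _ fun _ => rfl

/-- The right-hand side vanishes at `n = 0` because `R 1 = R 0 + R (-1) + R (-2)`,
and its increment from `n` to `n + 1` is `4 * R n ^ 2` by the recurrence at `n + 1`. -/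
theorem four_mul_sum_range_sq_of_tribonacci {K : Type*} [CommRing K] (R : ℤ → K)
    (hrec : ∀ m : ℤ, R m = R (m - 1) + R (m - 2) + R (m - 3)) (n : ℕ) :
    4 * ∑ k ∈ range n, R k ^ 2 =
      4 * R (n - 1) * R n - 4 * R 0 * R 1 - (R n - R (n - 2)) ^ 2 + (R (-2) + R 0) ^ 2
        + 4 * R 0 ^ 2 := by
  induction n with
  | zero =>
    have h1 := hrec 1
    norm_num at h1 ⊢
    rw [h1]
    ring
  | succ n ih =>
    have hsucc := hrec (n + 1)
    simp only [add_sub_cancel_right, show (n : ℤ) + 1 - 2 = n - 1 by ring,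
      show (n : ℤ) + 1 - 3 = n - 2 by ring] at hsucc
    rw [sum_range_succ, mul_add, ih]
    push_cast
    rw [add_sub_cancel_right, show (n : ℤ) + 1 - 2 = n - 1 by ring, hsucc]
    ring

theorem circulant_tribonacci_frobNorm_general
    (R : ℤ → ℝ)
    (hrec : ∀ m : ℤ, R m = R (m - 1) + R (m - 2) + R (m - 3))
    (n : ℕ)
    (A : Matrix (Fin n) (Fin n) ℝ)
    (hA : ∀ i j : Fin n, A i j = R (((j : ℤ) - (i : ℤ)) % (n : ℤ))) :
    Real.sqrt (∑ i : Fin n, ∑ j : Fin n, |A i j| ^ 2) =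
      Real.sqrt ((n : ℝ) *
        ((4 * R ((n : ℤ) - 1) * R (n : ℤ) - 4 * R 0 * R 1
          - (R (n : ℤ) - R ((n : ℤ) - 2)) ^ 2 + (R (-2) + R 0) ^ 2
          + 4 * R 0 ^ 2) / 4)) := by
  have hrow (i : Fin n) : ∑ j, |A i j| ^ 2 = ∑ k ∈ range n, R k ^ 2 := by
    simp_rw [hA, sq_abs]
    exact Fin.sum_univ_intEmod_sub (fun k => R k ^ 2) i
  rw [sum_congr rfl fun i _ => hrow i, sum_const, card_univ, Fintype.card_fin, nsmul_eq_mul,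
    ← four_mul_sum_range_sq_of_tribonacci R hrec n, mul_div_cancel_left₀ _ four_ne_zero]

/-- Euclidean (Frobenius) norm of the circulant matrix on the
first `n` generalized tribonacci numbers. -/
theorem circulant_tribonacci_frobNorm
    (a b c : ℤ) (ha : 0 < a) (hb : 0 < b) (hc : 0 < c)
    (R : ℤ → ℝ) (hR0 : R 0 = (a : ℝ)) (hR1 : R 1 = (b : ℝ)) (hR2 : R 2 = (c : ℝ))
    (hrec : ∀ m : ℤ, R m = R (m - 1) + R (m - 2) + R (m - 3))
    (n : ℕ) (hn : 1 ≤ n)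
    (A : Matrix (Fin n) (Fin n) ℝ)
    (hA : ∀ i j : Fin n, A i j = R (((j : ℤ) - (i : ℤ)) % (n : ℤ))) :
    Real.sqrt (∑ i : Fin n, ∑ j : Fin n, |A i j| ^ 2) =
      Real.sqrt ((n : ℝ) *
        ((4 * R ((n : ℤ) - 1) * R (n : ℤ) - 4 * R 0 * R 1
          - (R (n : ℤ) - R ((n : ℤ) - 2)) ^ 2 + (R (-2) + R 0) ^ 2
          + 4 * R 0 ^ 2) / 4)) :=
  circulant_tribonacci_frobNorm_general R hrec n A hA
end

section
/- Let n ≥ 1 and let A be the n×n Hankel matrix with entries a_{ij} = R_{i+j−1} (1 ≤ i, j ≤ n) on the generalized tribonacci sequence. Then ‖A‖₁ = ‖A‖_∞ = (R_{2n+2} − R_{2n} − R_{n+2} + R_n)/2. -/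
/-!
All entries are positive, so the absolute values drop, and row `i` and column `i` both sum to
the window `R (i+1) + ⋯ + R (i+n)`. Since `2 R m = (R (m+3) - R (m+1)) - (R (m+2) - R m)`, twice
a window sum telescopes to `R (k+n+2) - R (k+n) - R (k+2) + R k`. Shifting the window from `k` to
`k+1` adds `R (k+n) - R k`, which is `≥ 0` for `k ≥ 1`, `n ≥ 2` because `R (k+2) ≥ R k` and `R` is
nondecreasing from index 2 on; so the last window `R n + ⋯ + R (2n-1)` is the largest.
-/

open Finset

def windowSum (u : ℕ → ℝ) (n k : ℕ) : ℝ :=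
  ∑ i ∈ range n, u (k + i)

theorem windowSum_succ (u : ℕ → ℝ) (n k : ℕ) :
    windowSum u n (k + 1) = windowSum u n k + u (k + n) - u k := by
  have h := sum_range_succ' (fun i => u (k + i)) n
  rw [sum_range_succ] at h
  simp only [windowSum, ← add_assoc, add_right_comm k, add_zero] at h ⊢
  linarith

section Tribonacci

variable {u : ℕ → ℝ} (hu : ∀ m, u (m + 3) = u (m + 2) + u (m + 1) + u m)
include hu

theorem pos_of_tribonacci (h0 : 0 < u 0) (h1 : 0 < u 1) (h2 : 0 < u 2) : ∀ m, 0 < u m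
  | 0 => h0
  | 1 => h1
  | 2 => h2
  | m + 3 => by
    have := pos_of_tribonacci h0 h1 h2 m
    have := pos_of_tribonacci h0 h1 h2 (m + 1)
    have := pos_of_tribonacci h0 h1 h2 (m + 2)
    rw [hu]
    positivity

theorem tribonacci_le_add (hnn : ∀ m, 0 ≤ u m) {k d : ℕ} (hk : 1 ≤ k) (hd : 2 ≤ d) :
    u k ≤ u (k + d) := by
  have hmono : Monotone fun m => u (m + 2) :=
    monotone_nat_of_le_succ fun m => by linarith [hu m, hnn m, hnn (m + 1)]
  obtain ⟨k, rfl⟩ := Nat.exists_eq_add_of_le' hk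
  obtain ⟨d, rfl⟩ := Nat.exists_eq_add_of_le' hd
  calc u (k + 1) ≤ u (k + 3) := by linarith [hu k, hnn k, hnn (k + 2)]
    _ ≤ u (k + 1 + d + 2) := hmono (by omega : k + 1 ≤ k + 1 + d)

theorem two_mul_windowSum (n k : ℕ) :
    2 * windowSum u n k = u (k + n + 2) - u (k + n) - u (k + 2) + u k := by
  induction n with
  | zero => simp [windowSum]
  | succ n ih =>
    rw [windowSum, sum_range_succ, mul_add, ← windowSum, ih]
    have := hu (k + n)
    simp only [← add_assoc] at this ⊢
    linarith

theorem windowSum_monotoneOn (hnn : ∀ m, 0 ≤ u m) (n : ℕ) :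
    MonotoneOn (windowSum u n) (Set.Icc 1 n) := by
  rintro k ⟨hk, -⟩ q ⟨-, hqn⟩ hkq
  induction q, hkq using Nat.le_induction with
  | base => exact le_rfl
  | succ q hkq ih =>
    have := tribonacci_le_add hu hnn (k := q) (d := n) (by omega) (by omega)
    rw [windowSum_succ]
    linarith [ih (by omega)]

theorem ciSup_windowSum_succ (hnn : ∀ m, 0 ≤ u m) (n : ℕ) :
    ⨆ j : Fin (n + 1), windowSum u (n + 1) (j + 1) = windowSum u (n + 1) (n + 1) :=
  le_antisymm
    (ciSup_le fun j => windowSum_monotoneOn hu hnn (n + 1) ⟨by omega, by omega⟩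
      ⟨by omega, le_rfl⟩ (by omega))
    (le_ciSup_of_le (Finite.bddAbove_range _) (Fin.last n) le_rfl)

end Tribonacci

/-- the maximum column sum norm and the maximum row sum norm of
the Hankel matrix on the generalized tribonacci sequence. -/
theorem hankel_tribonacci_l1_linf_norms
    (a b c : ℤ) (ha : 0 < a) (hb : 0 < b) (hc : 0 < c)
    (R : ℤ → ℝ) (hR0 : R 0 = (a : ℝ)) (hR1 : R 1 = (b : ℝ)) (hR2 : R 2 = (c : ℝ))
    (hrec : ∀ m : ℤ, R m = R (m - 1) + R (m - 2) + R (m - 3))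
    (n : ℕ) (hn : 1 ≤ n)
    (A : Matrix (Fin n) (Fin n) ℝ)
    (hA : ∀ i j : Fin n, A i j = R ((i : ℤ) + (j : ℤ) + 1)) :
    (⨆ j : Fin n, ∑ i : Fin n, |A i j|) =
        (R (2 * (n : ℤ) + 2) - R (2 * (n : ℤ)) - R ((n : ℤ) + 2) + R (n : ℤ)) / 2 ∧
      (⨆ i : Fin n, ∑ j : Fin n, |A i j|) =
        (R (2 * (n : ℤ) + 2) - R (2 * (n : ℤ)) - R ((n : ℤ) + 2) + R (n : ℤ)) / 2 := by
  obtain ⟨n, rfl⟩ := Nat.exists_eq_add_of_le' hn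
  set u : ℕ → ℝ := fun k => R k
  have hu : ∀ m, u (m + 3) = u (m + 2) + u (m + 1) + u m := fun m => by
    have := hrec (m + 3)
    push_cast [u]
    ring_nf at this ⊢
    exact this
  have hpos : ∀ m, 0 < u m := pos_of_tribonacci hu (by simp [u, hR0, ha]) (by simp [u, hR1, hb])
    (by simp [u, hR2, hc])
  have habs : ∀ i j : Fin (n + 1), |A i j| = u (i + j + 1) := fun i j => by
    rw [hA, abs_of_pos (by exact_mod_cast hpos (i + j + 1))]
    simp [u]
  have hcol : ∀ j : Fin (n + 1), ∑ i, |A i j| = windowSum u (n + 1) (j + 1) := fun j => by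
    simp only [habs, windowSum, ← Fin.sum_univ_eq_sum_range (fun i => u (j + 1 + i))]
    congr! 2 with i; omega
  have hrow : ∀ i : Fin (n + 1), ∑ j, |A i j| = windowSum u (n + 1) (i + 1) := fun i => by
    simp only [habs, windowSum, ← Fin.sum_univ_eq_sum_range (fun j => u (i + 1 + j))]
    congr! 2 with j; omega
  have hvalue : (R (2 * ((n + 1 : ℕ) : ℤ) + 2) - R (2 * ((n + 1 : ℕ) : ℤ)) - R ((n + 1 : ℕ) + 2)
      + R (n + 1 : ℕ)) / 2 = windowSum u (n + 1) (n + 1) := by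
    have := two_mul_windowSum hu (n + 1) (n + 1)
    push_cast [u] at this ⊢
    ring_nf at this ⊢
    linarith
  simp only [hcol, hrow, hvalue, ciSup_windowSum_succ hu (fun m => (hpos m).le), and_self]
end

section
/- Let n ≥ 1 and let A be the n×n Hankel matrix with entries a_{ij} = Z_{i+j−1} (1 ≤ i, j ≤ n) on the generalized Pell–Padovan sequence. Then ‖A‖₁ = ‖A‖_∞ = Z_{2n+4} − Z_{n+4}. -/
/-!
From `Z (m + 5) - Z (m + 4) = Z m` the row and column sums of the Hankel matrix telescope:
the sum of `n` consecutive terms starting at `Z k` is `Z (n + k + 4) - Z (k + 4)`. Positive initial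
values make every term of nonnegative index positive, so the absolute values can be dropped, and
`Z (m + 2) = Z m + Z (m - 1)` makes the sequence grow along gaps of at least two from index one on.
Hence the window sums increase with the starting index as soon as `n ≥ 2`, and the largest one is
the last row (or column), `Z (2n + 4) - Z (n + 4)`; the matrix is symmetric, so both norms agree.
-/

open Finset

section PellPadovan

variable {G : Type*} [AddCommGroup G] {Z : ℤ → G}

def IsPellPadovan (Z : ℤ → G) : Prop :=
  ∀ m : ℤ, Z m = Z (m - 2) + Z (m - 3)

theorem IsPellPadovan.add_three (hZ : IsPellPadovan Z) (m : ℤ) :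
    Z (m + 3) = Z (m + 1) + Z m := by
  simpa only [add_sub_cancel_right, show m + 3 - 2 = m + 1 by ring] using hZ (m + 3)

theorem IsPellPadovan.add_five_sub_add_four (hZ : IsPellPadovan Z) (m : ℤ) :
    Z (m + 5) - Z (m + 4) = Z m := by
  have h5 := hZ.add_three (m + 2)
  have h4 := hZ.add_three (m + 1)
  have h3 := hZ.add_three m
  rw [show m + 2 + 3 = m + 5 by ring, show m + 2 + 1 = m + 3 by ring] at h5
  rw [show m + 1 + 3 = m + 4 by ring, show m + 1 + 1 = m + 2 by ring] at h4
  rw [h5, h4, h3]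
  abel

theorem IsPellPadovan.sum_range (hZ : IsPellPadovan Z) (n : ℕ) (k : ℤ) :
    ∑ i ∈ range n, Z (i + k) = Z (n + k + 4) - Z (k + 4) := by
  induction n with
  | zero => simp
  | succ n ih =>
    rw [sum_range_succ, ih, ← hZ.add_five_sub_add_four (n + k), Nat.cast_succ,
      show (n : ℤ) + 1 + k + 4 = n + k + 5 by ring]
    abel

theorem sum_range_add_one_eq (f : ℤ → G) (n : ℕ) (k : ℤ) :
    ∑ i ∈ range n, f (i + (k + 1)) = ∑ i ∈ range n, f (i + k) + (f (n + k) - f k) := by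
  have h := (sum_range_succ' (fun i : ℕ => f (i + k)) n).symm.trans (sum_range_succ _ n)
  simp only [Nat.cast_succ, add_assoc, add_comm (1 : ℤ), Nat.cast_zero, zero_add] at h
  rw [add_sub, eq_sub_iff_add_eq, h]

variable [PartialOrder G] [IsOrderedAddMonoid G]

theorem IsPellPadovan.pos (hZ : IsPellPadovan Z)
    (h0 : 0 < Z 0) (h1 : 0 < Z 1) (h2 : 0 < Z 2) (k : ℕ) : 0 < Z k := by
  induction k using Nat.strong_induction_on with
  | _ k ih =>
    match k with
    | 0 => exact h0
    | 1 => exact h1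
    | 2 => exact h2
    | m + 3 =>
      have h := hZ.add_three m
      push_cast at h ⊢
      rw [h]
      exact add_pos (by exact_mod_cast ih (m + 1) (by omega)) (ih m (by omega))

theorem IsPellPadovan.le_add_two (hZ : IsPellPadovan Z)
    (hpos : ∀ k : ℕ, 0 < Z k) {k : ℕ} (hk : 1 ≤ k) : Z k ≤ Z ↑(k + 2) := by
  have h := hZ.add_three ↑(k - 1)
  rw [show ((k - 1 : ℕ) : ℤ) + 3 = ↑(k + 2) by omega, show ((k - 1 : ℕ) : ℤ) + 1 = k by omega] at h
  rw [h]
  exact le_add_of_nonneg_right (hpos (k - 1)).le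

theorem IsPellPadovan.le_add_three (hZ : IsPellPadovan Z)
    (hpos : ∀ k : ℕ, 0 < Z k) (k : ℕ) : Z k ≤ Z ↑(k + 3) := by
  have h := hZ.add_three k
  rw [show (k : ℤ) + 3 = ↑(k + 3) by omega, show (k : ℤ) + 1 = ↑(k + 1) by omega] at h
  rw [h]
  exact le_add_of_nonneg_left (hpos (k + 1)).le

theorem IsPellPadovan.le_add (hZ : IsPellPadovan Z)
    (hpos : ∀ k : ℕ, 0 < Z k) {k d : ℕ} (hk : 1 ≤ k) (hd : 2 ≤ d) : Z k ≤ Z ↑(k + d) := by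
  induction d using Nat.strong_induction_on with
  | _ d ih =>
    match d, hd with
    | 2, _ => exact hZ.le_add_two hpos hk
    | 3, _ => exact hZ.le_add_three hpos k
    | d + 4, _ =>
      calc Z k ≤ Z ↑(k + (d + 2)) := ih (d + 2) (by omega) (by omega)
        _ ≤ Z ↑(k + (d + 2) + 2) := hZ.le_add_two hpos (by omega)
        _ = Z ↑(k + (d + 4)) := by rw [show k + (d + 2) + 2 = k + (d + 4) by omega]

theorem IsPellPadovan.sum_range_le (hZ : IsPellPadovan Z)
    (hpos : ∀ k : ℕ, 0 < Z k) {n j j' : ℕ} (hjj' : j ≤ j') (hj' : j' < n) :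
    ∑ i ∈ range n, Z (i + (j + 1)) ≤ ∑ i ∈ range n, Z (i + (j' + 1)) := by
  induction j', hjj' using Nat.le_induction with
  | base => rfl
  | succ j' _ ih =>
    have hgrowth : Z ((j' : ℤ) + 1) ≤ Z (n + ((j' : ℤ) + 1)) := by
      simpa only [add_comm (j' + 1), Nat.cast_add, Nat.cast_one] using
        hZ.le_add hpos (k := j' + 1) (d := n) (by omega) (by omega)
    rw [Nat.cast_succ, sum_range_add_one_eq Z n ((j' : ℤ) + 1)]
    exact le_add_of_le_of_nonneg (ih (by omega)) (sub_nonneg.2 hgrowth)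

end PellPadovan

/-- the maximum column sum norm and the maximum row sum norm of
the Hankel matrix on the generalized Pell–Padovan sequence. -/
theorem hankel_pell_padovan_l1_linf_norms
    (a b c : ℤ) (ha : 0 < a) (hb : 0 < b) (hc : 0 < c)
    (Z : ℤ → ℝ) (hZ0 : Z 0 = (a : ℝ)) (hZ1 : Z 1 = (b : ℝ)) (hZ2 : Z 2 = (c : ℝ))
    (hrec : ∀ m : ℤ, Z m = Z (m - 2) + Z (m - 3))
    (n : ℕ) (hn : 1 ≤ n)
    (A : Matrix (Fin n) (Fin n) ℝ)
    (hA : ∀ i j : Fin n, A i j = Z ((i : ℤ) + (j : ℤ) + 1)) :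
    (⨆ j : Fin n, ∑ i : Fin n, |A i j|) = Z (2 * (n : ℤ) + 4) - Z ((n : ℤ) + 4) ∧
      (⨆ i : Fin n, ∑ j : Fin n, |A i j|) = Z (2 * (n : ℤ) + 4) - Z ((n : ℤ) + 4) := by
  obtain ⟨m, rfl⟩ : ∃ m, n = m + 1 := ⟨n - 1, by omega⟩
  have hZ : IsPellPadovan Z := hrec
  have hpos : ∀ k : ℕ, 0 < Z k := hZ.pos (by rw [hZ0]; exact_mod_cast ha)
    (by rw [hZ1]; exact_mod_cast hb) (by rw [hZ2]; exact_mod_cast hc)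
  have hcol (j : Fin (m + 1)) :
      ∑ i, |A i j| = ∑ i ∈ range (m + 1), Z (i + ((j : ℕ) + 1)) := by
    rw [← Fin.sum_univ_eq_sum_range (fun i => Z (i + ((j : ℕ) + 1)))]
    refine sum_congr rfl fun i _ => ?_
    rw [hA, abs_of_pos (by exact_mod_cast hpos (i + j + 1)), add_assoc]
  have hlast :
      ∑ i ∈ range (m + 1), Z (i + ((m : ℤ) + 1)) = Z (2 * ↑(m + 1) + 4) - Z (↑(m + 1) + 4) := by
    rw [hZ.sum_range]
    push_cast
    ring_nf
  have hcolumns : (⨆ j : Fin (m + 1), ∑ i, |A i j|) = Z (2 * ↑(m + 1) + 4) - Z (↑(m + 1) + 4) := by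
    refine le_antisymm (ciSup_le fun j => ?_) ?_
    · rw [hcol, ← hlast]
      exact hZ.sum_range_le hpos (Fin.is_le j) (Nat.lt_succ_self m)
    · refine (le_ciSup (Set.finite_range _).bddAbove (Fin.last m)).trans_eq' ?_
      rw [hcol, Fin.val_last, hlast]
  refine ⟨hcolumns, ?_⟩
  convert hcolumns using 4 with i j
  rw [hA, hA, add_comm (i : ℤ)]
end
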